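/- Let n ≥ 2 and let G be a finite multigraph with integer vertex labels (d_i), and suppose vertex i₀ has exactly two incident edges e₁ (joining i₀ to j) and e₂ (joining i₀ to k), with d_{i₀} ≡ 0 (mod n). Let G′ be the multigraph obtained by deleting i₀ and replacing e₁, e₂ by a single edge from j to k, keeping all other labels. Then n-th limit-root weight assignments on G (weights in {1,…,n−1} on edge-ends, summing to n on each edge, and summing to d_i mod n at each vertex) are in bijection with n-th limit-root weight assignments on G′: given the weight u on the end of e₁ at j, the weights at i₀ are forced to be n − u on e₁ and u on e₂, hence n − u on the end of e₂ at k. -/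
import Mathlib


open scoped BigOperators

/-- An `n`-th limit-root weight assignment on a finite multigraph with vertex type `V`,
edge type `E` and integer vertex labels `d`.  Each edge `e` has two ends,
`(ends e).1` and `(ends e).2`; the assignment gives the end `(ends e).1` the weight `w e`
and the end `(ends e).2` the complementary weight `n − w e` (so the two weights on each
edge sum to `n`), all weights lie in `{1, …, n−1}`, and at each vertex `i` the sum of the
weights of all incident edge-ends is congruent to the label `d i` modulo `n`. -/
def IsWeight (n : ℕ) {V E : Type} [Fintype E] [DecidableEq V]
    (ends : E → V × V) (d : V → ℤ) (w : E → ℤ) : Prop :=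
  (∀ e : E, 1 ≤ w e ∧ w e ≤ (n : ℤ) - 1) ∧
  ∀ i : V, (∑ e : E, ((if (ends e).1 = i then w e else 0) +
      (if (ends e).2 = i then (n : ℤ) - w e else 0))) ≡ d i [ZMOD (n : ℤ)]

/-- Let `n ≥ 2` and let `G` be a finite loopless multigraph with integer
vertex labels `d`, and suppose the vertex `i₀` has label `d i₀ ≡ 0 (mod n)` and exactly two
incident edges: `e₁` joining `j` to `i₀` and `e₂` joining `i₀` to `k`.  Let `G′` be the
multigraph on the vertices `≠ i₀` obtained by deleting `i₀` and replacing `e₁, e₂` by a single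
edge from `j` to `k` (realized on the edge type `{e // e ≠ e₂}` by redirecting `e₁`).  Then
the weights at `i₀` are forced (`w e₂ = w e₁`), and restriction of weight assignments is a
bijection between `n`-th limit-root weight assignments on `G` and on `G′`. -/
theorem contract_degree_two_vertex (n : ℕ) (hn : 2 ≤ n)
    (V E : Type) [Fintype E] [DecidableEq V] [DecidableEq E]
    (ends : E → V × V) (d : V → ℤ)
    (i₀ j k : V) (e₁ e₂ : E) (he : e₁ ≠ e₂) (hj : j ≠ i₀) (hk : k ≠ i₀)
    (h₁ : ends e₁ = (j, i₀)) (h₂ : ends e₂ = (i₀, k))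
    (hother : ∀ e : E, e ≠ e₁ → e ≠ e₂ → (ends e).1 ≠ i₀ ∧ (ends e).2 ≠ i₀)
    (hloopless : ∀ e : E, (ends e).1 ≠ (ends e).2)
    (hd : d i₀ ≡ 0 [ZMOD (n : ℤ)]) :
    (∀ w : E → ℤ, IsWeight n ends d w → w e₂ = w e₁) ∧
    ∃ F : {w : E → ℤ // IsWeight n ends d w} ≃
        {w' : {e : E // e ≠ e₂} → ℤ //
          IsWeight n
            (fun e : {e : E // e ≠ e₂} =>
              if h : e.1 = e₁ then
                ((⟨j, hj⟩ : {v : V // v ≠ i₀}), (⟨k, hk⟩ : {v : V // v ≠ i₀}))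
              else
                (⟨(ends e.1).1, (hother e.1 h e.2).1⟩, ⟨(ends e.1).2, (hother e.1 h e.2).2⟩))
            (fun v : {v : V // v ≠ i₀} => d v.1) w'},
      ∀ (w : {w : E → ℤ // IsWeight n ends d w}) (e : {e : E // e ≠ e₂}),
        (F w).1 e = w.1 e.1 := by
    classical
  set ends' : {e : E // e ≠ e₂} → {v : V // v ≠ i₀} × {v : V // v ≠ i₀} :=
    (fun e : {e : E // e ≠ e₂} =>
      if h : e.1 = e₁ then
        ((⟨j, hj⟩ : {v : V // v ≠ i₀}), (⟨k, hk⟩ : {v : V // v ≠ i₀}))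
      else
        (⟨(ends e.1).1, (hother e.1 h e.2).1⟩, ⟨(ends e.1).2, (hother e.1 h e.2).2⟩))
    with hends'
  -- splitting sums over E at e₂
  have hsplit : ∀ f : E → ℤ, (∑ e : E, f e)
      = f e₂ + ∑ e : {e : E // e ≠ e₂}, f e.1 := by
    intro f
    rw [← Finset.add_sum_erase _ f (Finset.mem_univ e₂),
      Finset.sum_subtype (p := fun e => e ≠ e₂) (Finset.univ.erase e₂) (fun x => by simp) f]
  -- the forced equality
  have hforced : ∀ w : E → ℤ, IsWeight n ends d w → w e₂ = w e₁ := by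
    intro w hw
    obtain ⟨hb1, hb1'⟩ := hw.1 e₁
    obtain ⟨hb2, hb2'⟩ := hw.1 e₂
    have hS := (hw.2 i₀).trans hd
    have hsum : (∑ e : E, ((if (ends e).1 = i₀ then w e else 0) +
        (if (ends e).2 = i₀ then (n : ℤ) - w e else 0)))
        = ((n : ℤ) - w e₁) + w e₂ := by
      rw [Fintype.sum_eq_add e₁ e₂ he]
      · simp [h₁, h₂, hj, hk]
      · intro x hx
        obtain ⟨hx1, hx2⟩ := hother x hx.1 hx.2
        simp [hx1, hx2]
    rw [hsum] at hS
    have hdvd : (n : ℤ) ∣ (0 - ((n : ℤ) - w e₁ + w e₂)) := hS.dvd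
    have hdvd2 : (n : ℤ) ∣ (w e₁ - w e₂) := by
      have h3 : (w e₁ - w e₂) = (0 - ((n : ℤ) - w e₁ + w e₂)) + (n : ℤ) := by ring
      rw [h3]; exact dvd_add hdvd dvd_rfl
    have h4 : w e₁ - w e₂ = 0 := by
      refine Int.eq_zero_of_abs_lt_dvd hdvd2 ?_
      rw [abs_lt]; omega
    omega
  -- the key sum identity
  have hkey : ∀ (w : E → ℤ), w e₂ = w e₁ → ∀ (v : V) (hv : v ≠ i₀),
      (∑ e : {e : E // e ≠ e₂},
        ((if (ends' e).1 = (⟨v, hv⟩ : {v : V // v ≠ i₀}) then w e.1 else 0) +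
         (if (ends' e).2 = (⟨v, hv⟩ : {v : V // v ≠ i₀}) then (n : ℤ) - w e.1 else 0)))
      = ∑ e : E, ((if (ends e).1 = v then w e else 0) +
          (if (ends e).2 = v then (n : ℤ) - w e else 0)) := by
    intro w hw12 v hv
    rw [hsplit]
    have hpt : ∀ e : {e : E // e ≠ e₂},
        ((if (ends' e).1 = (⟨v, hv⟩ : {v : V // v ≠ i₀}) then w e.1 else 0) +
         (if (ends' e).2 = (⟨v, hv⟩ : {v : V // v ≠ i₀}) then (n : ℤ) - w e.1 else 0))
        = ((if (ends e.1).1 = v then w e.1 else 0) +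
           (if (ends e.1).2 = v then (n : ℤ) - w e.1 else 0)) +
          (if e = (⟨e₁, he⟩ : {e : E // e ≠ e₂}) then
            (if k = v then (n : ℤ) - w e₁ else 0) else 0) := by
      intro e
      by_cases h : e.1 = e₁
      · have he' : e = (⟨e₁, he⟩ : {e : E // e ≠ e₂}) := Subtype.ext h
        subst he'
        simp only [hends', dif_pos rfl, h₁, if_pos rfl]
        by_cases hjv : j = v <;> by_cases hkv : k = v <;>
          simp [Subtype.ext_iff, hjv, hkv, Ne.symm hv]
      · have hne : e ≠ (⟨e₁, he⟩ : {e : E // e ≠ e₂}) := by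
          intro hh; exact h (congrArg Subtype.val hh)
        simp [hends', dif_neg h, hne, Subtype.ext_iff]
    rw [Finset.sum_congr rfl (fun e _ => hpt e), Finset.sum_add_distrib,
      Finset.sum_ite_eq' Finset.univ (⟨e₁, he⟩ : {e : E // e ≠ e₂})
        (fun _ => (if k = v then (n : ℤ) - w e₁ else 0))]
    simp only [Finset.mem_univ, if_true, h₂]
    have : (i₀ = v) = False := by simp [Ne.symm hv]
    rw [hw12]
    by_cases hkv : k = v <;> simp [hkv, Ne.symm hv] <;> ring
  refine ⟨hforced, ?_⟩
  -- the restriction and extension maps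
  have hres : ∀ w : E → ℤ, IsWeight n ends d w →
      IsWeight n ends' (fun v : {v : V // v ≠ i₀} => d v.1) (fun e => w e.1) := by
    intro w hw
    refine ⟨fun e => hw.1 e.1, ?_⟩
    rintro ⟨v, hv⟩
    rw [hkey w (hforced w hw) v hv]
    exact hw.2 v
  have hextmem : ∀ w' : {e : E // e ≠ e₂} → ℤ,
      IsWeight n ends' (fun v : {v : V // v ≠ i₀} => d v.1) w' →
      IsWeight n ends d (fun e => if h : e = e₂ then w' ⟨e₁, he⟩ else w' ⟨e, h⟩) := by
    intro w' hw'
    set w : E → ℤ := fun e => if h : e = e₂ then w' ⟨e₁, he⟩ else w' ⟨e, h⟩ with hwdef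
    have hval : ∀ e : {e : E // e ≠ e₂}, w e.1 = w' e := by
      intro e; simp only [hwdef, dif_neg e.2]
    have hw1 : w e₁ = w' ⟨e₁, he⟩ := hval ⟨e₁, he⟩
    have hw2 : w e₂ = w' ⟨e₁, he⟩ := by simp [hwdef]
    refine ⟨?_, ?_⟩
    · intro e
      by_cases h : e = e₂
      · simp only [hwdef, dif_pos h]; exact hw'.1 ⟨e₁, he⟩
      · simp only [hwdef, dif_neg h]; exact hw'.1 ⟨e, h⟩
    · intro i
      by_cases hi : i = i₀
      · subst hi
        have hsum : (∑ e : E, ((if (ends e).1 = i then w e else 0) +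
            (if (ends e).2 = i then (n : ℤ) - w e else 0)))
            = ((n : ℤ) - w e₁) + w e₂ := by
          rw [Fintype.sum_eq_add e₁ e₂ he]
          · simp [h₁, h₂, hj, hk]
          · intro x hx
            obtain ⟨hx1, hx2⟩ := hother x hx.1 hx.2
            simp [hx1, hx2]
        rw [hsum, hw1, hw2]
        have : ((n : ℤ) - w' ⟨e₁, he⟩ + w' ⟨e₁, he⟩) = (n : ℤ) := by ring
        rw [this]
        exact (Int.modEq_zero_iff_dvd.2 dvd_rfl).trans hd.symm
      · rw [← hkey w (hw2.trans hw1.symm) i hi]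
        have := hw'.2 ⟨i, hi⟩
        calc (∑ e : {e : E // e ≠ e₂},
              ((if (ends' e).1 = (⟨i, hi⟩ : {v : V // v ≠ i₀}) then w e.1 else 0) +
               (if (ends' e).2 = (⟨i, hi⟩ : {v : V // v ≠ i₀}) then (n : ℤ) - w e.1 else 0)))
            = ∑ e : {e : E // e ≠ e₂},
              ((if (ends' e).1 = (⟨i, hi⟩ : {v : V // v ≠ i₀}) then w' e else 0) +
               (if (ends' e).2 = (⟨i, hi⟩ : {v : V // v ≠ i₀}) then (n : ℤ) - w' e else 0)) := by
              exact Finset.sum_congr rfl (fun e _ => by rw [hval e])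
          _ ≡ d i [ZMOD (n : ℤ)] := this
  refine ⟨{
      toFun := fun w => ⟨fun e => w.1 e.1, hres w.1 w.2⟩
      invFun := fun w' => ⟨fun e => if h : e = e₂ then w'.1 ⟨e₁, he⟩ else w'.1 ⟨e, h⟩,
        hextmem w'.1 w'.2⟩
      left_inv := ?_
      right_inv := ?_ }, fun w e => rfl⟩
  · rintro ⟨w, hw⟩
    apply Subtype.ext
    funext e
    by_cases h : e = e₂
    · subst h; simp only [dif_pos rfl]; exact (hforced w hw).symm
    · simp only [dif_neg h]
  · rintro ⟨w', hw'⟩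
    apply Subtype.ext
    funext e
    simp only [dif_neg e.2]
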